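/- For the function f(U) = (1/2)‖A − U‖_F^2 on the symplectic Stiefel manifold SpSt(2n,2k) with fixed A ∈ ℝ^{2n×2k}, the Riemannian gradient under the right-invariant metric is grad f(U) = (U − A) U^T U + J_{2n} U (U − A)^T J_{2n} U, and this matrix satisfies the tangent-space condition (grad f(U))^+ U + U^+ grad f(U) = 0. -/
import Mathlib


open Matrix

/-- The standard symplectic matrix `J_{2m} = [[0, I_m], [-I_m, 0]]`. -/
def symplJ (m : ℕ) : Matrix (Fin m ⊕ Fin m) (Fin m ⊕ Fin m) ℝ :=
  Matrix.fromBlocks 0 1 (-1) 0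

/-- The symplectic inverse `X⁺ = J_{2k}ᵀ Xᵀ J_{2n}`. -/
def symplInvRect {n k : ℕ} (X : Matrix (Fin n ⊕ Fin n) (Fin k ⊕ Fin k) ℝ) :
    Matrix (Fin k ⊕ Fin k) (Fin n ⊕ Fin n) ℝ :=
  (symplJ k)ᵀ * Xᵀ * symplJ n

/-- The right-invariant metric on `SpSt(2n,2k)`:
`g_U(X₁,X₂) = tr(X₁ᵀ (I − (1/2) Jᵀ U (UᵀU)⁻¹ Uᵀ J) X₂ (UᵀU)⁻¹)`. -/
noncomputable def metricGSt {n k : ℕ}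
    (U X₁ X₂ : Matrix (Fin n ⊕ Fin n) (Fin k ⊕ Fin k) ℝ) : ℝ :=
  Matrix.trace (X₁ᵀ *
    (1 - (1 / 2 : ℝ) • ((symplJ n)ᵀ * U * (Uᵀ * U)⁻¹ * Uᵀ * symplJ n)) *
    X₂ * (Uᵀ * U)⁻¹)

/-- The Riemannian gradient of `f(U) = (1/2)‖A − U‖_F²` under the right-invariant
metric: `grad f(U) = (U − A) UᵀU + J U (U − A)ᵀ J U`. -/
noncomputable def gradNearest {n k : ℕ}
    (A U : Matrix (Fin n ⊕ Fin n) (Fin k ⊕ Fin k) ℝ) :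
    Matrix (Fin n ⊕ Fin n) (Fin k ⊕ Fin k) ℝ :=
  (U - A) * (Uᵀ * U) + symplJ n * U * (U - A)ᵀ * symplJ n * U

lemma symplJ_transpose (m : ℕ) : (symplJ m)ᵀ = -symplJ m := by
  simp [symplJ, Matrix.fromBlocks_transpose, Matrix.fromBlocks_neg]

lemma symplJ_mul_self (m : ℕ) : symplJ m * symplJ m = -1 := by
  simp [symplJ, Matrix.fromBlocks_multiply, Matrix.fromBlocks_neg, ← Matrix.fromBlocks_one]

lemma mulJJ {n : ℕ} {m : Type*} [Fintype m] (x : Matrix (Fin n ⊕ Fin n) m ℝ) :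
    symplJ n * (symplJ n * x) = -x := by
  rw [← Matrix.mul_assoc, symplJ_mul_self, Matrix.neg_mul, Matrix.one_mul]

lemma collapse_aux {n k : ℕ} {m : Type*} [Fintype m]
    (U : Matrix (Fin n ⊕ Fin n) (Fin k ⊕ Fin k) ℝ)
    (hS2 : Uᵀ * U * (Uᵀ * U)⁻¹ = 1) (x : Matrix (Fin k ⊕ Fin k) m ℝ) :
    Uᵀ * (U * ((Uᵀ * U)⁻¹ * x)) = x := by
  rw [← Matrix.mul_assoc, ← Matrix.mul_assoc, hS2, Matrix.one_mul]

lemma tang_aux {n k : ℕ} {m : Type*} [Fintype m]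
    (U Δ : Matrix (Fin n ⊕ Fin n) (Fin k ⊕ Fin k) ℝ)
    (hΔ2 : Uᵀ * symplJ n * Δ = -(Δᵀ * symplJ n * U)) (x : Matrix (Fin k ⊕ Fin k) m ℝ) :
    Uᵀ * (symplJ n * (Δ * x)) = -(Δᵀ * (symplJ n * (U * x))) := by
  calc Uᵀ * (symplJ n * (Δ * x)) = (Uᵀ * symplJ n * Δ) * x := by
        simp only [Matrix.mul_assoc]
    _ = -(Δᵀ * (symplJ n * (U * x))) := by
        rw [hΔ2]; simp only [Matrix.neg_mul, Matrix.mul_assoc]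

theorem riemannian_gradient_nearest_symplectic {n k : ℕ}
    (A U : Matrix (Fin n ⊕ Fin n) (Fin k ⊕ Fin k) ℝ)
    (hU : symplInvRect U * U = 1) :
    (symplInvRect (gradNearest A U) * U +
      symplInvRect U * gradNearest A U = 0) ∧
    ∀ Δ : Matrix (Fin n ⊕ Fin n) (Fin k ⊕ Fin k) ℝ,
      symplInvRect Δ * U + symplInvRect U * Δ = 0 →
      metricGSt U (gradNearest A U) Δ = Matrix.trace ((U - A)ᵀ * Δ) := by
  -- basic consequences of `hU`
  have hU2 : Uᵀ * symplJ n * U = symplJ k := by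
    have h : symplJ k * (symplInvRect U * U) = symplJ k * 1 := by rw [hU]
    simp only [symplInvRect, symplJ_transpose, Matrix.mul_one, Matrix.neg_mul, Matrix.mul_neg,
      ← Matrix.mul_assoc, symplJ_mul_self, Matrix.one_mul, neg_neg] at h
    exact h
  have hUinj : ∀ x : (Fin k ⊕ Fin k) → ℝ, U *ᵥ x = 0 → x = 0 := by
    intro x hx
    have h1 : symplJ k *ᵥ x = 0 := by
      rw [← hU2, ← Matrix.mulVec_mulVec, ← Matrix.mulVec_mulVec, hx, Matrix.mulVec_zero,
        Matrix.mulVec_zero]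
    have h2 : (-(symplJ k)) *ᵥ (symplJ k *ᵥ x) = x := by
      rw [Matrix.mulVec_mulVec, Matrix.neg_mul, symplJ_mul_self, neg_neg, Matrix.one_mulVec]
    rw [h1, Matrix.mulVec_zero] at h2
    exact h2.symm
  have hSzero : ∀ x : (Fin k ⊕ Fin k) → ℝ, (Uᵀ * U) *ᵥ x = 0 → x = 0 := by
    intro x hx
    have h0 : (U *ᵥ x) ⬝ᵥ (U *ᵥ x) = 0 := by
      have h := congrArg (fun v => x ⬝ᵥ v) hx
      simpa [← Matrix.mulVec_mulVec, Matrix.dotProduct_mulVec, Matrix.vecMul_transpose] using h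
    exact hUinj x (dotProduct_self_eq_zero.mp h0)
  have hS : IsUnit (Uᵀ * U) := by
    refine Matrix.mulVec_injective_iff_isUnit.mp ?_
    intro a b hab
    have h := hSzero (a - b) (by rw [Matrix.mulVec_sub, hab, sub_self])
    exact sub_eq_zero.mp h
  have hSdet : IsUnit (Uᵀ * U).det := (Matrix.isUnit_iff_isUnit_det _).mp hS
  have hS1 : (Uᵀ * U)⁻¹ * (Uᵀ * U) = 1 := Matrix.nonsing_inv_mul _ hSdet
  have hS2 : (Uᵀ * U) * (Uᵀ * U)⁻¹ = 1 := Matrix.mul_nonsing_inv _ hSdet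
  have hSiT : ((Uᵀ * U)⁻¹)ᵀ = (Uᵀ * U)⁻¹ := by
    rw [Matrix.transpose_nonsing_inv, Matrix.transpose_mul, Matrix.transpose_transpose]
  constructor
  · -- tangency of the gradient
    simp only [symplInvRect, gradNearest, transpose_add, transpose_mul, transpose_transpose,
      transpose_sub, symplJ_transpose, Matrix.mul_assoc, Matrix.mul_add, Matrix.add_mul,
      Matrix.neg_mul, Matrix.mul_neg, neg_neg, mulJJ]
    abel
  · intro Δ hΔ
    have hΔ2 : Uᵀ * symplJ n * Δ = -(Δᵀ * symplJ n * U) := by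
      have h : symplJ k * (symplInvRect Δ * U + symplInvRect U * Δ) = symplJ k * 0 := by
        rw [hΔ]
      simp only [symplInvRect, symplJ_transpose, Matrix.mul_add, Matrix.neg_mul,
        Matrix.mul_neg, ← Matrix.mul_assoc, symplJ_mul_self, Matrix.one_mul, neg_neg,
        Matrix.mul_zero] at h
      exact eq_neg_of_add_eq_zero_right h
    simp only [metricGSt, gradNearest]
    set D : Matrix (Fin n ⊕ Fin n) (Fin k ⊕ Fin k) ℝ := U - A with hD
    simp only [symplJ_transpose, transpose_add, transpose_mul, transpose_transpose,
      Matrix.mul_sub, Matrix.sub_mul, Matrix.mul_add, Matrix.add_mul,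
      Matrix.neg_mul, Matrix.mul_neg, neg_neg, Matrix.mul_smul, Matrix.smul_mul,
      Matrix.mul_one, Matrix.one_mul, Matrix.mul_assoc, mulJJ, collapse_aux U hS2,
      tang_aux U Δ hΔ2,
      Matrix.trace_add, Matrix.trace_sub, Matrix.trace_neg, Matrix.trace_smul, smul_eq_mul]
    have e1 : (Uᵀ * (U * (Dᵀ * (Δ * (Uᵀ * U)⁻¹)))).trace = (Dᵀ * Δ).trace := by
      rw [← Matrix.mul_assoc, Matrix.trace_mul_comm]
      simp only [Matrix.mul_assoc]
      rw [hS1, Matrix.mul_one]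
    have h3 : (Uᵀ * (U * (Dᵀ * (symplJ n *
          (U * ((Uᵀ * U)⁻¹ * (Δᵀ * (symplJ n * (U * (Uᵀ * U)⁻¹))))))))).trace
        = (Δᵀ * (symplJ n * (U * (Dᵀ * (symplJ n * (U * (Uᵀ * U)⁻¹)))))).trace := by
      rw [← Matrix.mul_assoc, Matrix.trace_mul_comm]
      simp only [Matrix.mul_assoc]
      rw [hS1, Matrix.mul_one]
      rw [show Dᵀ * (symplJ n * (U * ((Uᵀ * U)⁻¹ * (Δᵀ * (symplJ n * U)))))
          = (Dᵀ * (symplJ n * (U * (Uᵀ * U)⁻¹))) * (Δᵀ * (symplJ n * U)) by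
        simp only [Matrix.mul_assoc]]
      rw [Matrix.trace_mul_comm]
      simp only [Matrix.mul_assoc]
    have h2 : (Uᵀ * (symplJ n * (D * (Δᵀ * (symplJ n * (U * (Uᵀ * U)⁻¹)))))).trace
        = -(Δᵀ * (symplJ n * (U * (Dᵀ * (symplJ n * (U * (Uᵀ * U)⁻¹)))))).trace := by
      rw [← Matrix.trace_transpose]
      simp only [Matrix.transpose_mul, Matrix.transpose_transpose, symplJ_transpose, hSiT,
        Matrix.mul_neg, Matrix.neg_mul, neg_neg, Matrix.mul_assoc]
      rw [Matrix.trace_mul_comm]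
      simp only [Matrix.mul_assoc]
      rw [show Uᵀ * (symplJ n * (Δ * (Dᵀ * (symplJ n * (U * (Uᵀ * U)⁻¹)))))
          = (Uᵀ * symplJ n * Δ) * (Dᵀ * (symplJ n * (U * (Uᵀ * U)⁻¹))) by
        simp only [Matrix.mul_assoc], hΔ2, Matrix.neg_mul]
      simp only [Matrix.mul_assoc, Matrix.trace_neg]
    rw [e1, h2, h3]; ring
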